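/- arXiv:1804.03047 — 12 statements merged into one kernel-verified Lean document; each statement's English description precedes it below -/
import Mathlib

section
/- Let (P, ⪯, ∧) be a locally finite meet semilattice with a least element 0̂ (0̂ ⪯ x for all x ∈ P), and suppose there is a countable family of finite nonempty subsets S₁, S₂, … of P whose union is all of P. Then f : P → ℝ is positive definite if and only if for every x ∈ P, ∑_{y : y ⪯ x} f(y) μ_P(y, x) ≥ 0, where μ_P is the Möbius function of the incidence algebra of P. -/
/-!
Let `g` be the Möbius transform of `f`, `g x = ∑_{y ≤ x} f y μ(y, x)`, so that
`f x = ∑_{z ≤ x} g z`. Then `f (x ⊓ y) = ∑_{z ≤ x, z ≤ y} g z`, i.e. every meet matrix factors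
as `Zᵀ * diagonal g * Z` with `Z` a zeta matrix. Hence `g ≥ 0` makes all meet matrices positive
semidefinite. Conversely, on the interval `Iic x` the vector `μ(·, x)` is mapped by `Z` to the
unit vector at `x`, so the quadratic form of the meet matrix of `Iic x` at `μ(·, x)` is `g x`.
-/

/-- A function `f : P → ℝ` on a meet semilattice is *positive definite* if for every
finite nonempty subset `S ⊆ P` the meet matrix `(S)_f`, with entries `f (x ⊓ y)` for
`x, y ∈ S`, is positive semidefinite. -/
def IsPosDefOnMeets {P : Type*} [SemilatticeInf P] (f : P → ℝ) : Prop :=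
  ∀ S : Finset P, S.Nonempty →
    (Matrix.of fun x y : S => f (x.1 ⊓ y.1)).PosSemidef

open Finset IncidenceAlgebra Matrix

def zetaMatrix {P : Type*} (R : Type*) [Zero R] [One R] [LE P] [DecidableLE P] (D S : Finset P) :
    Matrix D S R :=
  of fun z x => zeta R z.1 x.1

section MoebiusInversion

variable {𝕜 α : Type*} [Ring 𝕜] [PartialOrder α] [OrderBot α] [LocallyFiniteOrder α]
  [DecidableEq α]

theorem sum_Iic_sum_Iic_mul_mu (f : α → 𝕜) (x : α) :
    ∑ z ∈ Iic x, ∑ y ∈ Iic z, f y * mu 𝕜 y z = f x := by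
  rw [sum_comm' (t' := Iic x) (s' := fun y => Icc y x) fun z y => by
    simp only [mem_Iic, mem_Icc]
    exact ⟨fun ⟨hzx, hyz⟩ => ⟨⟨hyz, hzx⟩, hyz.trans hzx⟩, fun ⟨h, _⟩ => ⟨h.2, h.1⟩⟩]
  simp_rw [← mul_sum, sum_Icc_mu_right, mul_ite, mul_one, mul_zero]
  simp

theorem zetaMatrix_mulVec_mu [DecidableLE α] (x : α) :
    zetaMatrix 𝕜 (Iic x) (Iic x) *ᵥ (fun i => mu 𝕜 i.1 x) =
      Pi.single ⟨x, mem_Iic.2 le_rfl⟩ 1 := by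
  funext z
  have hIcc : (Iic x).filter (z.1 ≤ ·) = Icc z.1 x := by
    ext; simp only [mem_filter, mem_Iic, mem_Icc, and_comm]
  simp only [mulVec, dotProduct, zetaMatrix, of_apply, zeta_apply, ite_mul, one_mul, zero_mul,
    Pi.single_apply, Subtype.ext_iff]
  rw [sum_coe_sort (Iic x) (fun i => if z.1 ≤ i then mu 𝕜 i x else 0), ← sum_filter, hIcc,
    sum_Icc_mu_left]

end MoebiusInversion

section MeetMatrix

variable {P : Type*} [SemilatticeInf P]

def meetMatrix {R : Type*} (f : P → R) (S : Finset P) : Matrix S S R :=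
  of fun x y => f (x.1 ⊓ y.1)

variable [LocallyFiniteOrderBot P] [DecidableLE P] [DecidableEq P]

theorem meetMatrix_eq_transpose_mul_diagonal_mul {R : Type*} [CommRing R] {f g : P → R}
    (hf : ∀ x, f x = ∑ z ∈ Iic x, g z) {S D : Finset P} (hD : ∀ x ∈ S, Iic x ⊆ D) :
    meetMatrix f S =
      (zetaMatrix R D S)ᵀ * diagonal (fun z : D => g z) * zetaMatrix R D S := by
  ext x y
  have hIic : Iic (x.1 ⊓ y.1) = D.filter (fun z => z ≤ x.1 ∧ z ≤ y.1) := by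
    ext z
    simp only [mem_Iic, mem_filter, le_inf_iff, iff_and_self]
    exact fun h => hD x x.2 (mem_Iic.2 h.1)
  rw [Matrix.mul_apply]
  simp only [meetMatrix, zetaMatrix, mul_diagonal, transpose_apply, of_apply, zeta_apply, hf, hIic,
    sum_filter]
  rw [← sum_coe_sort D]
  refine sum_congr rfl fun z _ => ?_
  by_cases hx : z.1 ≤ x.1 <;> by_cases hy : z.1 ≤ y.1 <;> simp [hx, hy]

theorem posSemidef_meetMatrix {f g : P → ℝ} (hf : ∀ x, f x = ∑ z ∈ Iic x, g z)
    (hg : ∀ x, 0 ≤ g x) (S : Finset P) : (meetMatrix f S).PosSemidef := by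
  rw [meetMatrix_eq_transpose_mul_diagonal_mul hf (D := S.biUnion Iic)
    fun _ hx => subset_biUnion_of_mem Iic hx, ← conjTranspose_eq_transpose_of_trivial]
  exact (posSemidef_diagonal_iff.2 fun z : S.biUnion Iic => hg z).conjTranspose_mul_mul_same _

end MeetMatrix

theorem nonneg_of_posSemidef_meetMatrix_Iic {P : Type*} [SemilatticeInf P] [OrderBot P]
    [LocallyFiniteOrder P] [DecidableEq P] [DecidableLE P] {f g : P → ℝ}
    (hf : ∀ x, f x = ∑ z ∈ Iic x, g z) {x : P} (h : (meetMatrix f (Iic x)).PosSemidef) :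
    0 ≤ g x := by
  have hq := h.dotProduct_mulVec_nonneg fun i => mu ℝ i.1 x
  rw [meetMatrix_eq_transpose_mul_diagonal_mul hf (D := Iic x)
    fun _ hy => Iic_subset_Iic.2 (mem_Iic.1 hy), star_trivial, ← mulVec_mulVec, dotProduct_mulVec,
    ← vecMul_vecMul, vecMul_transpose, zetaMatrix_mulVec_mu] at hq
  rwa [single_vecMul_diagonal, dotProduct_single, Pi.single_eq_same, one_mul, mul_one] at hq

theorem posDef_iff_moebius_sum_nonneg_general
    {P : Type*} [SemilatticeInf P] [OrderBot P] [LocallyFiniteOrder P] [DecidableEq P]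
    (f : P → ℝ) :
    IsPosDefOnMeets f ↔
      ∀ x : P, 0 ≤ ∑ y ∈ Finset.Icc (⊥ : P) x, f y * IncidenceAlgebra.mu ℝ y x := by
  classical
  have hf (x : P) : f x = ∑ z ∈ Iic x, ∑ y ∈ Icc ⊥ z, f y * mu ℝ y z :=
    (sum_Iic_sum_Iic_mul_mu f x).symm
  exact ⟨fun h x => nonneg_of_posSemidef_meetMatrix_Iic hf (h (Iic x) ⟨x, mem_Iic.2 le_rfl⟩),
    fun hg S _ => posSemidef_meetMatrix hf hg S⟩

/-- Let `(P, ⪯, ∧)` be a locally finite meet semilattice with a least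
element `⊥`, admitting a countable covering by finite nonempty subsets `S₁, S₂, …`.
Then `f : P → ℝ` is positive definite iff for every `x ∈ P` one has
`∑_{y ⪯ x} f(y) μ_P(y, x) ≥ 0`, where `μ_P` is the Möbius function of the incidence
algebra of `P`. -/
theorem posDef_iff_moebius_sum_nonneg
    {P : Type*} [SemilatticeInf P] [OrderBot P] [LocallyFiniteOrder P] [DecidableEq P]
    (S : ℕ → Finset P) (hne : ∀ m, (S m).Nonempty)
    (hcov : ∀ x : P, ∃ m, x ∈ S m) (f : P → ℝ) :
    IsPosDefOnMeets f ↔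
      ∀ x : P, 0 ≤ ∑ y ∈ Finset.Icc (⊥ : P) x, f y * IncidenceAlgebra.mu ℝ y x :=
  posDef_iff_moebius_sum_nonneg_general f
end

section
/- Let (P, ⪯, ∧) be a locally finite meet semilattice with a least element 0̂, and suppose there is a countable family of finite nonempty subsets S₁, S₂, … of P whose union is all of P. If f : P → ℝ has the form f(x) = ∑_{y : y ⪯ x} g(y) for a function g : P → ℝ satisfying g(y) ≥ 0 for all y ∈ P, then f is positive definite. -/
open Finset Matrix

theorem Matrix.posSemidef_sum_smul_vecMulVec_self {ι κ : Type*} [Fintype ι] (s : Finset κ)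
    {c : κ → ℝ} (hc : ∀ z ∈ s, 0 ≤ c z) (u : κ → ι → ℝ) :
    (∑ z ∈ s, c z • vecMulVec (u z) (u z)).PosSemidef :=
  posSemidef_sum s fun z hz => (posSemidef_vecMulVec_self_star (u z)).smul (hc z hz)

theorem Finset.sum_Iic_inf_eq_sum_ite {P : Type*} [SemilatticeInf P] [LocallyFiniteOrderBot P]
    [DecidableLE P] {T : Finset P} {x : P} (hx : Iic x ⊆ T) (y : P) (g : P → ℝ) :
    ∑ z ∈ Iic (x ⊓ y), g z = ∑ z ∈ T, if z ≤ x ∧ z ≤ y then g z else 0 := by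
  rw [← sum_filter]
  refine sum_congr (ext fun z => ?_) fun _ _ => rfl
  simp only [mem_Iic, le_inf_iff, mem_filter, iff_and_self]
  exact fun h => hx (mem_Iic.2 h.1)

theorem posDef_of_sum_nonneg_general
    {P : Type*} [SemilatticeInf P] [OrderBot P] [LocallyFiniteOrder P]
    (g : P → ℝ) (hg : ∀ y : P, 0 ≤ g y) (f : P → ℝ)
    (hf : ∀ x : P, f x = ∑ y ∈ Finset.Icc (⊥ : P) x, g y) :
    IsPosDefOnMeets f := by
  classical
  intro A _
  let u : P → A → ℝ := fun z x => if z ≤ x.1 then 1 else 0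
  have hdecomp : (Matrix.of fun x y : A => f (x.1 ⊓ y.1)) =
      ∑ z ∈ A.biUnion Iic, g z • vecMulVec (u z) (u z) := by
    ext x y
    rw [of_apply, hf, Icc_bot, sum_Iic_inf_eq_sum_ite (subset_biUnion_of_mem Iic x.2)]
    simp only [Matrix.sum_apply, Matrix.smul_apply, vecMulVec_apply, smul_eq_mul, u]
    exact sum_congr rfl fun z _ => by rw [ite_zero_mul_ite_zero, mul_one, mul_boole]
  rw [hdecomp]
  exact posSemidef_sum_smul_vecMulVec_self _ (fun z _ => hg z) u

/-- Let `(P, ⪯, ∧)` be a locally finite meet semilattice with a least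
element `⊥`, admitting a countable covering by finite nonempty subsets `S₁, S₂, …`.
If `f(x) = ∑_{y ⪯ x} g(y)` for some `g : P → ℝ` with `g ≥ 0`, then `f` is positive
definite. -/
theorem posDef_of_sum_nonneg
    {P : Type*} [SemilatticeInf P] [OrderBot P] [LocallyFiniteOrder P]
    (S : ℕ → Finset P) (hne : ∀ m, (S m).Nonempty)
    (hcov : ∀ x : P, ∃ m, x ∈ S m)
    (g : P → ℝ) (hg : ∀ y : P, 0 ≤ g y) (f : P → ℝ)
    (hf : ∀ x : P, f x = ∑ y ∈ Finset.Icc (⊥ : P) x, g y) :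
    IsPosDefOnMeets f :=
  posDef_of_sum_nonneg_general g hg f hf
end

section
/- Let (P, ⪯, ∧) be a meet semilattice. If f : P → ℝ and g : P → ℝ are positive definite, then the pointwise product f·g is positive definite. -/
/-- If `f` and `g` are positive definite on a meet semilattice, then
the pointwise product `f·g` is positive definite. -/
theorem posDef_mul {P : Type*} [SemilatticeInf P] (f g : P → ℝ)
    (hf : IsPosDefOnMeets f) (hg : IsPosDefOnMeets g) :
    IsPosDefOnMeets (fun x => f x * g x) :=
  fun S hS => (hf S hS).hadamard (hg S hS)
end

section
/- Let (P, ⪯, ∧) be a meet semilattice and let f : P → ℝ be positive definite. Then f is monotone with respect to the partial order: if x ⪯ y for x, y ∈ P, then f(x) ≤ f(y). -/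
theorem Matrix.PosSemidef.diag_add_diag_sub_nonneg {n R : Type*} [Fintype n] [DecidableEq n]
    [Ring R] [PartialOrder R] [StarRing R] {M : Matrix n n R} (hM : M.PosSemidef) (i j : n) :
    0 ≤ M i i + M j j - M i j - M j i := by
  have h := hM.dotProduct_mulVec_nonneg (Pi.single i 1 - Pi.single j 1)
  simp only [star_sub, Pi.star_single, star_one, sub_dotProduct, mulVec_sub, dotProduct_sub,
    mulVec_single_one, single_dotProduct, one_mul, col_apply] at h
  convert h using 1
  abel

/-- If `f` is positive definite on a meet semilattice, then `f` is
monotone: `x ⪯ y` implies `f(x) ≤ f(y)`. -/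
theorem posDef_monotone {P : Type*} [SemilatticeInf P] (f : P → ℝ)
    (hf : IsPosDefOnMeets f) : ∀ x y : P, x ≤ y → f x ≤ f y := by
  classical
  intro x y hxy
  have hx : x ∈ ({x, y} : Finset P) := Finset.mem_insert_self x {y}
  have hy : y ∈ ({x, y} : Finset P) := Finset.mem_insert_of_mem (Finset.mem_singleton_self y)
  have h := (hf {x, y} ⟨x, hx⟩).diag_add_diag_sub_nonneg ⟨x, hx⟩ ⟨y, hy⟩
  simp only [Matrix.of_apply, inf_idem, inf_eq_left.mpr hxy, inf_eq_right.mpr hxy] at h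
  linarith
end

section
/- Let (P, ⪯_P, ∧_P) and (Q, ⪯_Q, ∧_Q) be locally finite meet semilattices, let S = {x₁, …, xₙ} ⊆ P and T = {y₁, …, y_m} ⊆ Q be finite meet closed sets whose enumerations satisfy x_i ⪯_P x_j ⇒ i ≤ j and y_i ⪯_Q y_j ⇒ i ≤ j, and let f : P × Q → ℝ. Define the n × n matrix E by E_{ij} = 1 if x_j ⪯_P x_i and 0 otherwise, the m × m matrix F by F_{ij} = 1 if y_j ⪯_Q y_i and 0 otherwise, and the nm × nm diagonal matrix Λ whose diagonal entry at the lexicographically ordered multi-index (i, j) ∈ {1,…,n} × {1,…,m} is c(i, j) = ∑_{k, ℓ : x_k ⪯_P x_i, y_ℓ ⪯_Q y_j} f(x_k, y_ℓ) μ_S(x_k, x_i) μ_T(y_ℓ, y_j), where μ_S and μ_T are the Möbius functions of the subposets S and T. Then the meet matrix (S × T)_f, indexed lexicographically by S × T with entries f applied to the componentwise meet, satisfies (S × T)_f = (E ⊗ F) Λ (E ⊗ F)ᵀ, where ⊗ denotes the Kronecker product. -/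
open Matrix Kronecker

/-- Let `(P, ⪯_P, ∧_P)` and `(Q, ⪯_Q, ∧_Q)` be locally finite meet
semilattices, let `S = {x₁, …, xₙ} ⊆ P` and `T = {y₁, …, y_m} ⊆ Q` be meet closed sets
enumerated compatibly with the orders, and let `f : P × Q → ℝ`.  With `E`, `F` the zeta
matrices of `S`, `T`, and `Λ` the diagonal matrix whose entry at the multi-index `(i, j)`
is `c(i,j) = ∑_{x_k ⪯ x_i, y_ℓ ⪯ y_j} f(x_k, y_ℓ) μ_S(x_k, x_i) μ_T(y_ℓ, y_j)`
(`μ_S`, `μ_T` being the Möbius functions of the subposets `S`, `T`, characterized as the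
inverses of the corresponding zeta functions), the meet matrix `(S × T)_f` satisfies
`(S × T)_f = (E ⊗ F) Λ (E ⊗ F)ᵀ`. -/
theorem meetMatrix_prod_decomposition
    {P Q : Type*} [SemilatticeInf P] [SemilatticeInf Q]
    [LocallyFiniteOrder P] [LocallyFiniteOrder Q]
    [DecidableRel (· ≤ · : P → P → Prop)] [DecidableRel (· ≤ · : Q → Q → Prop)]
    {n m : ℕ} (x : Fin n → P) (y : Fin m → Q)
    (hxinj : Function.Injective x) (hyinj : Function.Injective y)
    -- `S` and `T` are meet closed:
    (hxmeet : ∀ i j : Fin n, ∃ k : Fin n, x k = x i ⊓ x j)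
    (hymeet : ∀ i j : Fin m, ∃ k : Fin m, y k = y i ⊓ y j)
    -- the enumerations are compatible with the partial orders:
    (hxord : ∀ i j : Fin n, x i ≤ x j → i ≤ j)
    (hyord : ∀ i j : Fin m, y i ≤ y j → i ≤ j)
    (f : P → Q → ℝ)
    -- `μS` is the Möbius function of the subposet `S` (inverse of its zeta function):
    (μS : Fin n → Fin n → ℝ)
    (hμS0 : ∀ i j : Fin n, ¬ x i ≤ x j → μS i j = 0)
    (hμS : ∀ i j : Fin n, x i ≤ x j →
      (∑ k ∈ Finset.univ.filter fun k => x i ≤ x k ∧ x k ≤ x j, μS k j)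
        = if i = j then 1 else 0)
    -- `μT` is the Möbius function of the subposet `T`:
    (μT : Fin m → Fin m → ℝ)
    (hμT0 : ∀ i j : Fin m, ¬ y i ≤ y j → μT i j = 0)
    (hμT : ∀ i j : Fin m, y i ≤ y j →
      (∑ k ∈ Finset.univ.filter fun k => y i ≤ y k ∧ y k ≤ y j, μT k j)
        = if i = j then 1 else 0)
    (E : Matrix (Fin n) (Fin n) ℝ)
    (hE : ∀ i j : Fin n, E i j = if x j ≤ x i then 1 else 0)
    (F : Matrix (Fin m) (Fin m) ℝ)
    (hF : ∀ i j : Fin m, F i j = if y j ≤ y i then 1 else 0)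
    (Λ : Matrix (Fin n × Fin m) (Fin n × Fin m) ℝ)
    (hΛ : Λ = Matrix.diagonal fun p : Fin n × Fin m =>
      ∑ k ∈ Finset.univ.filter fun k => x k ≤ x p.1,
        ∑ l ∈ Finset.univ.filter fun l => y l ≤ y p.2,
          f (x k) (y l) * μS k p.1 * μT l p.2) :
    (Matrix.of fun p q : Fin n × Fin m => f (x p.1 ⊓ x q.1) (y p.2 ⊓ y q.2))
      = (E ⊗ₖ F) * Λ * (E ⊗ₖ F)ᵀ := by
  classical
  -- `μS` is also a right inverse of the zeta matrix of `S`
  have keyS : ∀ a g : Fin n,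
      (∑ k : Fin n, μS a k * (if x k ≤ x g then (1:ℝ) else 0)) = if a = g then 1 else 0 := by
    have hZM : (Matrix.of fun i j : Fin n => if x i ≤ x j then (1:ℝ) else 0) *
        (Matrix.of fun i j => μS i j) = 1 := by
      ext i j
      simp only [Matrix.mul_apply, Matrix.of_apply, Matrix.one_apply]
      by_cases hij : x i ≤ x j
      · rw [← hμS i j hij, Finset.sum_filter]
        refine Finset.sum_congr rfl fun k _ => ?_
        by_cases h1 : x i ≤ x k
        · by_cases h2 : x k ≤ x j
          · simp [h1, h2]
          · simp [h1, h2, hμS0 k j h2]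
        · simp [h1]
      · have hne : i ≠ j := fun hc => hij (hc ▸ le_rfl)
        rw [if_neg hne]
        refine Finset.sum_eq_zero fun k _ => ?_
        by_cases h1 : x i ≤ x k
        · by_cases h2 : x k ≤ x j
          · exact absurd (h1.trans h2) hij
          · simp [hμS0 k j h2]
        · simp [h1]
    have hMZ := mul_eq_one_comm.mp hZM
    intro a g
    have h2 : ((Matrix.of fun i j => μS i j) *
        (Matrix.of fun i j : Fin n => if x i ≤ x j then (1:ℝ) else 0)) a g
        = (1 : Matrix (Fin n) (Fin n) ℝ) a g := by rw [hMZ]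
    simpa [Matrix.mul_apply, Matrix.one_apply] using h2
  have keyT : ∀ b h : Fin m,
      (∑ l : Fin m, μT b l * (if y l ≤ y h then (1:ℝ) else 0)) = if b = h then 1 else 0 := by
    have hZM : (Matrix.of fun i j : Fin m => if y i ≤ y j then (1:ℝ) else 0) *
        (Matrix.of fun i j => μT i j) = 1 := by
      ext i j
      simp only [Matrix.mul_apply, Matrix.of_apply, Matrix.one_apply]
      by_cases hij : y i ≤ y j
      · rw [← hμT i j hij, Finset.sum_filter]
        refine Finset.sum_congr rfl fun k _ => ?_
        by_cases h1 : y i ≤ y k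
        · by_cases h2 : y k ≤ y j
          · simp [h1, h2]
          · simp [h1, h2, hμT0 k j h2]
        · simp [h1]
      · have hne : i ≠ j := fun hc => hij (hc ▸ le_rfl)
        rw [if_neg hne]
        refine Finset.sum_eq_zero fun k _ => ?_
        by_cases h1 : y i ≤ y k
        · by_cases h2 : y k ≤ y j
          · exact absurd (h1.trans h2) hij
          · simp [hμT0 k j h2]
        · simp [h1]
    have hMZ := mul_eq_one_comm.mp hZM
    intro b h
    have h2 : ((Matrix.of fun i j => μT i j) *
        (Matrix.of fun i j : Fin m => if y i ≤ y j then (1:ℝ) else 0)) b h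
        = (1 : Matrix (Fin m) (Fin m) ℝ) b h := by rw [hMZ]
    simpa [Matrix.mul_apply, Matrix.one_apply] using h2
  subst hΛ
  ext p q
  obtain ⟨g, hg⟩ := hxmeet p.1 q.1
  obtain ⟨h, hh⟩ := hymeet p.2 q.2
  have hEg : ∀ s1 : Fin n, E p.1 s1 * E q.1 s1 = if x s1 ≤ x g then (1:ℝ) else 0 := by
    intro s1
    rw [hE, hE, hg]
    by_cases h1 : x s1 ≤ x p.1 <;> by_cases h2 : x s1 ≤ x q.1 <;>
      simp [h1, h2, le_inf_iff]
  have hFh : ∀ s2 : Fin m, F p.2 s2 * F q.2 s2 = if y s2 ≤ y h then (1:ℝ) else 0 := by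
    intro s2
    rw [hF, hF, hh]
    by_cases h1 : y s2 ≤ y p.2 <;> by_cases h2 : y s2 ≤ y q.2 <;>
      simp [h1, h2, le_inf_iff]
  -- replace the filtered diagonal entries by full sums
  have hC : ∀ s : Fin n × Fin m,
      (∑ k ∈ Finset.univ.filter fun k => x k ≤ x s.1,
        ∑ l ∈ Finset.univ.filter fun l => y l ≤ y s.2,
          f (x k) (y l) * μS k s.1 * μT l s.2)
      = ∑ a : Fin n, ∑ b : Fin m, f (x a) (y b) * μS a s.1 * μT b s.2 := by
    intro s
    rw [Finset.sum_filter]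
    refine Finset.sum_congr rfl fun a _ => ?_
    by_cases h1 : x a ≤ x s.1
    · rw [if_pos h1, Finset.sum_filter]
      refine Finset.sum_congr rfl fun b _ => ?_
      by_cases h2 : y b ≤ y s.2
      · rw [if_pos h2]
      · simp [hμT0 b s.2 h2]
    · rw [if_neg h1]
      exact (Finset.sum_eq_zero fun b _ => by simp [hμS0 a s.1 h1]).symm
  show f (x p.1 ⊓ x q.1) (y p.2 ⊓ y q.2) = _
  have expand : ((E ⊗ₖ F) * Matrix.diagonal (fun s : Fin n × Fin m =>
        ∑ k ∈ Finset.univ.filter fun k => x k ≤ x s.1,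
          ∑ l ∈ Finset.univ.filter fun l => y l ≤ y s.2,
            f (x k) (y l) * μS k s.1 * μT l s.2) * (E ⊗ₖ F)ᵀ) p q
      = ∑ s : Fin n × Fin m, ∑ a : Fin n, ∑ b : Fin m,
          f (x a) (y b) * (μS a s.1 * (if x s.1 ≤ x g then (1:ℝ) else 0))
            * (μT b s.2 * (if y s.2 ≤ y h then (1:ℝ) else 0)) := by
    rw [Matrix.mul_apply]
    refine Finset.sum_congr rfl fun s _ => ?_
    rw [Matrix.mul_diagonal, Matrix.transpose_apply, Matrix.kroneckerMap_apply,
      Matrix.kroneckerMap_apply, hC s]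
    rw [Finset.mul_sum, Finset.sum_mul]
    refine Finset.sum_congr rfl fun a _ => ?_
    rw [Finset.mul_sum, Finset.sum_mul]
    refine Finset.sum_congr rfl fun b _ => ?_
    have := hEg s.1
    have := hFh s.2
    calc E p.1 s.1 * F p.2 s.2 * (f (x a) (y b) * μS a s.1 * μT b s.2)
          * (E q.1 s.1 * F q.2 s.2)
        = (E p.1 s.1 * E q.1 s.1) * (F p.2 s.2 * F q.2 s.2)
          * (f (x a) (y b) * μS a s.1 * μT b s.2) := by ring
      _ = _ := by rw [hEg s.1, hFh s.2]; ring
  rw [expand, Finset.sum_comm]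
  have step2 : ∀ a : Fin n,
      (∑ s : Fin n × Fin m, ∑ b : Fin m,
        f (x a) (y b) * (μS a s.1 * (if x s.1 ≤ x g then (1:ℝ) else 0))
          * (μT b s.2 * (if y s.2 ≤ y h then (1:ℝ) else 0)))
      = (if a = g then (1:ℝ) else 0) *
        ∑ b : Fin m, f (x a) (y b) * (if b = h then (1:ℝ) else 0) := by
    intro a
    rw [Finset.sum_comm]
    rw [Finset.mul_sum]
    refine Finset.sum_congr rfl fun b _ => ?_
    rw [Fintype.sum_prod_type]
    calc (∑ s1 : Fin n, ∑ s2 : Fin m,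
          f (x a) (y b) * (μS a s1 * (if x s1 ≤ x g then (1:ℝ) else 0))
            * (μT b s2 * (if y s2 ≤ y h then (1:ℝ) else 0)))
        = f (x a) (y b) *
          ((∑ s1 : Fin n, μS a s1 * (if x s1 ≤ x g then (1:ℝ) else 0)) *
           (∑ s2 : Fin m, μT b s2 * (if y s2 ≤ y h then (1:ℝ) else 0))) := by
          rw [Finset.sum_mul_sum]
          rw [Finset.mul_sum]
          refine Finset.sum_congr rfl fun s1 _ => ?_
          rw [Finset.mul_sum]
          exact Finset.sum_congr rfl fun s2 _ => by ring
      _ = _ := by rw [keyS a g, keyT b h]; ring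
  rw [Finset.sum_congr rfl fun a _ => step2 a]
  have : (∑ a : Fin n, (if a = g then (1:ℝ) else 0) *
      ∑ b : Fin m, f (x a) (y b) * (if b = h then (1:ℝ) else 0))
      = ∑ b : Fin m, f (x g) (y b) * (if b = h then (1:ℝ) else 0) := by
    rw [Finset.sum_eq_single g]
    · rw [if_pos rfl, one_mul]
    · intro a _ ha; rw [if_neg ha, zero_mul]
    · intro hg'; exact absurd (Finset.mem_univ g) hg'
  rw [this]
  rw [Finset.sum_eq_single h]
  · rw [if_pos rfl, mul_one, ← hg, ← hh]
  · intro b _ hb; rw [if_neg hb, mul_zero]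
  · intro hh'; exact absurd (Finset.mem_univ h) hh'
end

section
/- Let (P, ⪯_P, ∧_P) be a locally finite meet semilattice, let S = {x₁, …, xₙ} ⊆ P be a finite meet closed set whose enumeration satisfies x_i ⪯_P x_j ⇒ i ≤ j, and let f : P × P → ℝ satisfy f(x, y) = g(x)·g(y) for some g : P → ℝ. Define the n × n matrix E by E_{ij} = 1 if x_j ⪯_P x_i and 0 otherwise, and Λ = diag(c₁, …, cₙ) with c_i = ∑_{k : x_k ⪯_P x_i} g(x_k) μ_S(x_k, x_i), where μ_S is the Möbius function of the subposet S. Then the meet matrix (S × S)_f, indexed lexicographically by S × S with entries f applied to the componentwise meet, satisfies (S × S)_f = (E ⊗ E)(Λ ⊗ Λ)(E ⊗ E)ᵀ, where ⊗ denotes the Kronecker product. -/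
open Matrix Kronecker

/-- Let `(P, ⪯_P, ∧_P)` be a locally finite meet semilattice, let
`S = {x₁, …, xₙ} ⊆ P` be a meet closed set enumerated compatibly with the order, and
let `f : P × P → ℝ` satisfy `f(x, y) = g(x)·g(y)`.  With `E` the zeta matrix of `S`
and `Λ = diag(c₁, …, cₙ)`, `c_i = ∑_{x_k ⪯ x_i} g(x_k) μ_S(x_k, x_i)` (`μ_S` the Möbius
function of the subposet `S`), the meet matrix `(S × S)_f` satisfies
`(S × S)_f = (E ⊗ E)(Λ ⊗ Λ)(E ⊗ E)ᵀ`. -/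
theorem meetMatrix_prod_decomposition_of_factorable
    {P : Type*} [SemilatticeInf P] [LocallyFiniteOrder P]
    [DecidableRel (· ≤ · : P → P → Prop)]
    {n : ℕ} (x : Fin n → P)
    (hxinj : Function.Injective x)
    -- `S` is meet closed:
    (hxmeet : ∀ i j : Fin n, ∃ k : Fin n, x k = x i ⊓ x j)
    -- the enumeration is compatible with the partial order:
    (hxord : ∀ i j : Fin n, x i ≤ x j → i ≤ j)
    (f : P → P → ℝ) (g : P → ℝ)
    (hf : ∀ a b : P, f a b = g a * g b)
    -- `μS` is the Möbius function of the subposet `S` (inverse of its zeta function):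
    (μS : Fin n → Fin n → ℝ)
    (hμS0 : ∀ i j : Fin n, ¬ x i ≤ x j → μS i j = 0)
    (hμS : ∀ i j : Fin n, x i ≤ x j →
      (∑ k ∈ Finset.univ.filter fun k => x i ≤ x k ∧ x k ≤ x j, μS k j)
        = if i = j then 1 else 0)
    (E : Matrix (Fin n) (Fin n) ℝ)
    (hE : ∀ i j : Fin n, E i j = if x j ≤ x i then 1 else 0)
    (Λ : Matrix (Fin n) (Fin n) ℝ)
    (hΛ : Λ = Matrix.diagonal fun i : Fin n =>
      ∑ k ∈ Finset.univ.filter fun k => x k ≤ x i, g (x k) * μS k i) :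
    (Matrix.of fun p q : Fin n × Fin n => f (x p.1 ⊓ x q.1) (x p.2 ⊓ x q.2))
      = (E ⊗ₖ E) * (Λ ⊗ₖ Λ) * (E ⊗ₖ E)ᵀ := by
  classical
  set Z : Matrix (Fin n) (Fin n) ℝ :=
    Matrix.of (fun i j => if x i ≤ x j then (1 : ℝ) else 0) with hZ
  set M : Matrix (Fin n) (Fin n) ℝ := Matrix.of (fun i j => μS i j) with hM
  set d : Fin n → ℝ :=
    fun i => ∑ k ∈ Finset.univ.filter fun k => x k ≤ x i, g (x k) * μS k i with hd
  -- Z * M = 1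
  have hZM : Z * M = 1 := by
    ext i j
    rw [Matrix.mul_apply, Matrix.one_apply]
    by_cases hij : x i ≤ x j
    · rw [← hμS i j hij, Finset.sum_filter]
      apply Finset.sum_congr rfl
      intro k _
      by_cases h1 : x i ≤ x k
      · by_cases h2 : x k ≤ x j
        · simp [hZ, hM, h1, h2]
        · simp [hZ, hM, h1, h2, hμS0 k j h2]
      · simp [hZ, h1, not_and_of_not_left _ h1]
    · have hne : i ≠ j := by rintro rfl; exact hij le_rfl
      rw [if_neg hne]
      apply Finset.sum_eq_zero
      intro k _
      by_cases h1 : x i ≤ x k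
      · have h2 : ¬ x k ≤ x j := fun h => hij (h1.trans h)
        simp [hM, hμS0 k j h2]
      · simp [hZ, h1]
  have hMZ : M * Z = 1 := mul_eq_one_comm.mp hZM
  -- the diagonal entries as a full sum
  have hd' : ∀ i, d i = ∑ l, g (x l) * M l i := by
    intro i
    simp only [hd]
    rw [Finset.sum_filter]
    apply Finset.sum_congr rfl
    intro k _
    by_cases h : x k ≤ x i
    · simp [hM, h]
    · simp [hM, h, hμS0 k i h]
  -- key one-dimensional identity
  have key : ∀ i j, (E * Λ * Eᵀ) i j = g (x i ⊓ x j) := by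
    intro i j
    obtain ⟨m, hm⟩ := hxmeet i j
    rw [← hm]
    have h1 : (E * Λ * Eᵀ) i j = ∑ k, E i k * d k * E j k := by
      rw [hΛ, Matrix.mul_apply]
      simp only [Matrix.mul_diagonal, Matrix.transpose_apply]
    rw [h1]
    have h2 : ∀ k, E i k * d k * E j k = Z k m * d k := by
      intro k
      rw [hE, hE, hZ]
      by_cases h : x k ≤ x m
      · have := hm ▸ h
        rw [le_inf_iff] at this
        simp [h, this.1, this.2]
      · have : ¬ (x k ≤ x i ∧ x k ≤ x j) := by
          rw [← le_inf_iff, ← hm]; exact h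
        rcases not_and_or.mp this with h' | h' <;> simp [h, h']
    rw [Finset.sum_congr rfl fun k _ => h2 k]
    have h3 : ∑ k, Z k m * d k = ∑ l, g (x l) * (M * Z) l m := by
      simp only [hd', Finset.sum_mul, Matrix.mul_apply, Finset.mul_sum]
      rw [Finset.sum_comm]
      apply Finset.sum_congr rfl
      intro l _
      apply Finset.sum_congr rfl
      intro k _
      ring
    rw [h3, hMZ]
    simp [Matrix.one_apply]
  -- Kronecker assembly
  have hrhs : (E ⊗ₖ E) * (Λ ⊗ₖ Λ) * (E ⊗ₖ E)ᵀ = (E * Λ * Eᵀ) ⊗ₖ (E * Λ * Eᵀ) := by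
    rw [Matrix.mul_kronecker_mul]
    rw [show (E ⊗ₖ E)ᵀ = Eᵀ ⊗ₖ Eᵀ from Matrix.kroneckerMap_transpose _ _ _]
    rw [Matrix.mul_kronecker_mul]
  rw [hrhs]
  ext ⟨p1, p2⟩ ⟨q1, q2⟩
  rw [Matrix.kroneckerMap_apply]
  simp only [Matrix.of_apply]
  rw [hf, key, key]
end

section
/- Let d ≥ 1. A function f : ℤ₊^d → ℝ is positive definite if and only if (f *_d μ_d)(i₁, …, i_d) ≥ 0 for all i₁, …, i_d ∈ ℤ₊, where μ_d(i₁, …, i_d) = μ(i₁)⋯μ(i_d) with μ the arithmetic Möbius function, and *_d is the d-variate Dirichlet convolution. -/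
/-- A multivariate arithmetic function `f : ℤ₊^d → ℝ` (positive integers encoded as
positive natural numbers) is *positive definite* if for every finite nonempty set `S` of
`d`-tuples of positive integers, the matrix with entries `f(gcd(x₁,y₁), …, gcd(x_d,y_d))`
for `x, y ∈ S` is positive semidefinite. -/
def IsPosDefArith (d : ℕ) (f : (Fin d → ℕ) → ℝ) : Prop :=
  ∀ S : Finset (Fin d → ℕ), S.Nonempty → (∀ x ∈ S, ∀ i, 0 < x i) →
    (Matrix.of fun x y : S => f fun i => Nat.gcd (x.1 i) (y.1 i)).PosSemidef

/-- The arithmetic Möbius function, real valued. -/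
noncomputable def muR (n : ℕ) : ℝ := ((ArithmeticFunction.moebius n : ℤ) : ℝ)

/-- The `d`-variate Dirichlet convolution:
`(f *_d g)(i₁, …, i_d) = ∑_{k₁ ∣ i₁, …, k_d ∣ i_d} f(k) g(i₁/k₁, …, i_d/k_d)`. -/
noncomputable def dirichletConvD (d : ℕ) (f g : (Fin d → ℕ) → ℝ) : (Fin d → ℕ) → ℝ :=
  fun i => ∑ k ∈ Fintype.piFinset fun j => (i j).divisors, f k * g fun j => i j / k j

/-- The `d`-variate Möbius function `μ_d(i₁, …, i_d) = μ(i₁)⋯μ(i_d)`. -/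
noncomputable def muD (d : ℕ) : (Fin d → ℕ) → ℝ := fun i => ∏ j, muR (i j)

/-!
With `g = f *_d μ_d`, Möbius inversion gives `f n = ∑_{k ∣ n} g k`, so for any finite set `K`
containing the divisors of the points of `S`, the gcd matrix of `f` on `S` factors as
`Eᵀ · diag(g|_K) · E`, where `E k x = [k ∣ x]`. Hence `g ≥ 0` makes every gcd matrix positive
semidefinite. Conversely, on `S = K = {k ∣ i}` the matrix `E` is invertible (Möbius inversion
again), so positive semidefiniteness of the gcd matrix forces that of `diag(g|_K)`, and in
particular `g i ≥ 0`.
-/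

open Finset Matrix

lemma sum_divisors_muR (n : ℕ) : ∑ t ∈ n.divisors, muR t = if n = 1 then 1 else 0 := by
  have h := congrArg (· n) (ArithmeticFunction.coe_moebius_mul_coe_zeta (R := ℝ))
  simp only [ArithmeticFunction.coe_mul_zeta_apply, ArithmeticFunction.one_apply,
    ArithmeticFunction.intCoe_apply] at h
  exact h

lemma sum_divisors_filter_dvd_muR_div {n m : ℕ} (hn : n ≠ 0) (hm : m ∣ n) :
    ∑ t ∈ n.divisors with m ∣ t, muR (t / m) = if n = m then 1 else 0 := by
  have hm0 : 0 < m := Nat.pos_of_ne_zero (ne_zero_of_dvd_ne_zero hn hm)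
  have hreindex : ∑ t ∈ n.divisors with m ∣ t, muR (t / m) = ∑ s ∈ (n / m).divisors, muR s := by
    refine sum_nbij' (· / m) (m * ·) ?_ ?_ ?_ ?_ fun _ _ => rfl
    · simp only [mem_filter, Nat.mem_divisors]
      rintro t ⟨⟨htn, -⟩, hmt⟩
      exact ⟨Nat.div_dvd_div hmt htn,
        (Nat.div_pos (Nat.le_of_dvd (Nat.pos_of_ne_zero hn) hm) hm0).ne'⟩
    · simp only [mem_filter, Nat.mem_divisors]
      rintro s ⟨hs, -⟩
      exact ⟨⟨(Nat.mul_dvd_mul_left m hs).trans (Nat.mul_div_cancel' hm).dvd, hn⟩,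
        dvd_mul_right m s⟩
    · exact fun t ht => Nat.mul_div_cancel' (mem_filter.mp ht).2
    · exact fun s _ => Nat.mul_div_cancel_left s hm0
  simp only [hreindex, sum_divisors_muR, Nat.div_eq_iff_eq_mul_left hm0 hm, one_mul]

section

variable {ι : Type*} [Fintype ι]

def dvdMatrix (K S : Finset (ι → ℕ)) : Matrix K S ℝ :=
  of fun k x => if ∀ j, k.1 j ∣ x.1 j then 1 else 0

@[simp]
lemma dvdMatrix_apply (K S : Finset (ι → ℕ)) (k : K) (x : S) :
    dvdMatrix K S k x = if ∀ j, k.1 j ∣ x.1 j then 1 else 0 :=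
  rfl

variable [DecidableEq ι]

def piDivisors (n : ι → ℕ) : Finset (ι → ℕ) :=
  Fintype.piFinset fun j => (n j).divisors

lemma mem_piDivisors {k n : ι → ℕ} : k ∈ piDivisors n ↔ ∀ j, k j ∣ n j ∧ n j ≠ 0 := by
  simp only [piDivisors, Fintype.mem_piFinset, Nat.mem_divisors]

lemma self_mem_piDivisors {n : ι → ℕ} (hn : ∀ j, n j ≠ 0) : n ∈ piDivisors n :=
  mem_piDivisors.mpr fun j => ⟨dvd_rfl, hn j⟩

lemma dvd_of_mem_piDivisors {k n : ι → ℕ} (hk : k ∈ piDivisors n) (j : ι) : k j ∣ n j :=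
  (mem_piDivisors.mp hk j).1

lemma ne_zero_of_mem_piDivisors {k n : ι → ℕ} (hk : k ∈ piDivisors n) (j : ι) : k j ≠ 0 :=
  (Nat.pos_of_mem_divisors (Fintype.mem_piFinset.mp hk j)).ne'

lemma piDivisors_subset_piDivisors {m n : ι → ℕ} (hn : ∀ j, n j ≠ 0) (hm : ∀ j, m j ∣ n j) :
    piDivisors m ⊆ piDivisors n :=
  Fintype.piFinset_subset _ _ fun j => Nat.divisors_subset_of_dvd (hn j) (hm j)

lemma filter_dvd_piDivisors_eq_piFinset (n m : ι → ℕ)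
    [DecidablePred fun k : ι → ℕ => ∀ j, m j ∣ k j] :
    filter (fun k : ι → ℕ => ∀ j, m j ∣ k j) (piDivisors n) =
      Fintype.piFinset fun j => {t ∈ (n j).divisors | m j ∣ t} := by
  ext k
  simp only [piDivisors, mem_filter, Fintype.mem_piFinset, forall_and]

lemma sum_ite_dvd_eq_sum_piDivisors {M : Type*} [AddCommMonoid M] {K : Finset (ι → ℕ)}
    {n : ι → ℕ} (hn : ∀ j, n j ≠ 0) (hK : piDivisors n ⊆ K) (h : (ι → ℕ) → M)
    [DecidablePred fun k : K => ∀ j, k.1 j ∣ n j] :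
    ∑ k : K, (if ∀ j, k.1 j ∣ n j then h k else 0) = ∑ k ∈ piDivisors n, h k := by
  have hfilter : (univ.filter fun k : K => ∀ j, k.1 j ∣ n j).map (.subtype _) = piDivisors n := by
    ext k
    simp only [mem_map, mem_filter, mem_univ, true_and, Function.Embedding.subtype_apply,
      Subtype.exists, exists_and_right, exists_eq_right]
    exact ⟨fun ⟨_, hkn⟩ => mem_piDivisors.mpr fun j => ⟨hkn j, hn j⟩,
      fun hk => ⟨hK hk, dvd_of_mem_piDivisors hk⟩⟩
  rw [← sum_filter, ← hfilter, sum_map]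
  rfl

end

variable {d : ℕ}

lemma dirichletConvD_eq_sum_piDivisors (f g : (Fin d → ℕ) → ℝ) (n : Fin d → ℕ) :
    dirichletConvD d f g n = ∑ k ∈ piDivisors n, f k * g fun j => n j / k j :=
  rfl

lemma sum_piDivisors_filter_dvd_muD {n m : Fin d → ℕ} (hn : ∀ j, n j ≠ 0)
    (hm : ∀ j, m j ∣ n j) :
    ∑ k ∈ piDivisors n with ∀ j, m j ∣ k j, muD d (fun j => k j / m j) =
      if n = m then 1 else 0 := by
  rw [filter_dvd_piDivisors_eq_piFinset]
  unfold muD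
  rw [← prod_univ_sum (fun j => {t ∈ (n j).divisors | m j ∣ t}) fun j t => muR (t / m j)]
  simp only [sum_divisors_filter_dvd_muR_div (hn _) (hm _), Fintype.prod_ite_zero,
    prod_const_one, funext_iff]

theorem sum_piDivisors_dirichletConvD_muD (f : (Fin d → ℕ) → ℝ) {n : Fin d → ℕ}
    (hn : ∀ j, n j ≠ 0) :
    ∑ k ∈ piDivisors n, dirichletConvD d f (muD d) k = f n := by
  simp only [dirichletConvD_eq_sum_piDivisors]
  calc ∑ k ∈ piDivisors n, ∑ m ∈ piDivisors k, f m * muD d (fun j => k j / m j)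
      = ∑ m ∈ piDivisors n, ∑ k ∈ piDivisors n with ∀ j, m j ∣ k j,
          f m * muD d (fun j => k j / m j) := by
        refine sum_comm' fun k m => ?_
        simp only [mem_filter, mem_piDivisors]
        constructor
        · rintro ⟨hkn, hmk⟩
          exact ⟨⟨hkn, fun j => (hmk j).1⟩, fun j => ⟨(hmk j).1.trans (hkn j).1, (hkn j).2⟩⟩
        · rintro ⟨⟨hkn, hmk⟩, -⟩
          exact ⟨hkn, fun j => ⟨hmk j, ne_zero_of_dvd_ne_zero (hkn j).2 (hkn j).1⟩⟩
    _ = ∑ m ∈ piDivisors n, f m * if n = m then 1 else 0 := by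
        refine sum_congr rfl fun m hm => ?_
        rw [← mul_sum, sum_piDivisors_filter_dvd_muD hn (dvd_of_mem_piDivisors hm)]
    _ = f n := by
        simp only [mul_ite, mul_one, mul_zero, sum_ite_eq, self_mem_piDivisors hn, if_true]

theorem of_gcd_eq_conjTranspose_dvdMatrix_mul_diagonal_mul (f : (Fin d → ℕ) → ℝ)
    {S K : Finset (Fin d → ℕ)} (hS : ∀ x ∈ S, ∀ j, x j ≠ 0)
    (hK : ∀ x ∈ S, piDivisors x ⊆ K) :
    (of fun x y : S => f fun j => (x.1 j).gcd (y.1 j)) =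
      (dvdMatrix K S)ᴴ * diagonal (fun k : K => dirichletConvD d f (muD d) k) * dvdMatrix K S := by
  ext x y
  have hgcd : ∀ j, (x.1 j).gcd (y.1 j) ≠ 0 := fun j => Nat.gcd_ne_zero_left (hS x x.2 j)
  have hgcdK : piDivisors (fun j => (x.1 j).gcd (y.1 j)) ⊆ K :=
    (piDivisors_subset_piDivisors (hS x x.2) fun j => Nat.gcd_dvd_left _ _).trans (hK x x.2)
  rw [mul_apply]
  simp only [of_apply, mul_diagonal, conjTranspose_apply, dvdMatrix_apply, star_trivial,
    ite_mul, one_mul, zero_mul, mul_ite, mul_one, mul_zero, ← ite_and, ← forall_and]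
  simp only [← Nat.dvd_gcd_iff, Nat.gcd_comm (y.1 _)]
  rw [sum_ite_dvd_eq_sum_piDivisors hgcd hgcdK, sum_piDivisors_dirichletConvD_muD f hgcd]

theorem isUnit_dvdMatrix_piDivisors {n : Fin d → ℕ} (hn : ∀ j, n j ≠ 0) :
    IsUnit (dvdMatrix (piDivisors n) (piDivisors n)) := by
  -- `N * dvdMatrix = 1` is Möbius inversion of the point mass at `x`.
  let N : Matrix (piDivisors n) (piDivisors n) ℝ :=
    of fun x k => dirichletConvD d (Pi.single x.1 1) (muD d) k
  refine (isUnit_iff_isUnit_det _).mpr (isUnit_det_of_left_inverse (B := N) ?_)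
  ext x y
  have hy : ∀ j, y.1 j ≠ 0 := ne_zero_of_mem_piDivisors y.2
  have hyn : piDivisors y.1 ⊆ piDivisors n :=
    piDivisors_subset_piDivisors hn (dvd_of_mem_piDivisors y.2)
  simp only [N, mul_apply, dvdMatrix_apply, of_apply, mul_ite, mul_one, mul_zero]
  rw [sum_ite_dvd_eq_sum_piDivisors hy hyn, sum_piDivisors_dirichletConvD_muD _ hy,
    Pi.single_apply, one_apply]
  simp only [Subtype.ext_iff, eq_comm]

theorem posDefArith_iff_moebius_conv_nonneg_general (d : ℕ) (f : (Fin d → ℕ) → ℝ) :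
    IsPosDefArith d f ↔
      ∀ i : Fin d → ℕ, (∀ j, 0 < i j) → 0 ≤ dirichletConvD d f (muD d) i := by
  constructor
  · intro hf i hi
    have hi0 : ∀ j, i j ≠ 0 := fun j => (hi j).ne'
    have hG := hf (piDivisors i) ⟨i, self_mem_piDivisors hi0⟩
      fun x hx j => Nat.pos_of_ne_zero (ne_zero_of_mem_piDivisors hx j)
    rw [of_gcd_eq_conjTranspose_dvdMatrix_mul_diagonal_mul f
        (fun x hx => ne_zero_of_mem_piDivisors hx)
        (fun x hx => piDivisors_subset_piDivisors hi0 (dvd_of_mem_piDivisors hx)),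
      ← star_eq_conjTranspose, (isUnit_dvdMatrix_piDivisors hi0).posSemidef_star_left_conjugate_iff,
      posSemidef_diagonal_iff] at hG
    exact hG ⟨i, self_mem_piDivisors hi0⟩
  · intro hg S _ hS
    rw [of_gcd_eq_conjTranspose_dvdMatrix_mul_diagonal_mul f (K := S.biUnion piDivisors)
      (fun x hx j => (hS x hx j).ne') fun x hx => subset_biUnion_of_mem piDivisors hx]
    refine PosSemidef.conjTranspose_mul_mul_same (posSemidef_diagonal_iff.mpr fun k => ?_) _
    obtain ⟨x, -, hkx⟩ := mem_biUnion.mp k.2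
    exact hg k fun j => Nat.pos_of_ne_zero (ne_zero_of_mem_piDivisors hkx j)

/-- Let `d ≥ 1`.  A function `f : ℤ₊^d → ℝ` is positive definite iff
`(f *_d μ_d)(i₁, …, i_d) ≥ 0` for all positive integers `i₁, …, i_d`. -/
theorem posDefArith_iff_moebius_conv_nonneg (d : ℕ) (hd : 1 ≤ d) (f : (Fin d → ℕ) → ℝ) :
    IsPosDefArith d f ↔
      ∀ i : Fin d → ℕ, (∀ j, 0 < i j) → 0 ≤ dirichletConvD d f (muD d) i :=
  posDefArith_iff_moebius_conv_nonneg_general d f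
end

section
/- The function f : ℤ₊² → ℝ defined by f(x, y) = gcd(x, y) is positive definite; that is, for every finite nonempty set S ⊆ ℤ₊², the matrix indexed by S with entry at ((x₁, x₂), (y₁, y₂)) equal to gcd(gcd(x₁, y₁), gcd(x₂, y₂)) = gcd(x₁, x₂, y₁, y₂) is positive semidefinite. -/
/-!
Summing `n = ∑_{d ∣ n} φ(d)` over the common divisors gives `gcd(a, b) = ∑_{d ∣ a, d ∣ b} φ(d)`,
so the gcd matrix of finitely many positive integers is `∑_d φ(d) 1_d 1_dᵀ`, where `1_d` marks
the entries divisible by `d`: a sum of positive semidefinite rank-one matrices. In two variables,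
`gcd(gcd(x₁, y₁), gcd(x₂, y₂)) = gcd(gcd(x₁, x₂), gcd(y₁, y₂))`, so the matrix in question is the
gcd matrix of the numbers `gcd(x₁, x₂)`.
-/

/-- A bivariate arithmetic function `f : ℤ₊² → ℝ` (positive integers encoded as positive
natural numbers) is *positive definite* if for every finite nonempty set `S ⊆ ℤ₊²` the
matrix with entries `f(gcd(x₁,y₁), gcd(x₂,y₂))` for `(x₁,x₂), (y₁,y₂) ∈ S` is positive
semidefinite. -/
def IsPosDefArith2 (f : ℕ → ℕ → ℝ) : Prop :=
  ∀ S : Finset (ℕ × ℕ), S.Nonempty → (∀ p ∈ S, 0 < p.1 ∧ 0 < p.2) →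
    (Matrix.of fun x y : S =>
      f (Nat.gcd x.1.1 y.1.1) (Nat.gcd x.1.2 y.1.2)).PosSemidef

open Finset Matrix
open scoped Nat

theorem Nat.gcd_eq_sum_totient_of_dvd {a b n : ℕ} (hn : n ≠ 0) (ha : a ∣ n) :
    gcd a b = ∑ d ∈ n.divisors with d ∣ a ∧ d ∣ b, φ d := by
  rw [← sum_totient (gcd a b), ← divisors_filter_dvd_of_dvd hn ((gcd_dvd_left a b).trans ha)]
  simp only [dvd_gcd_iff]

theorem Matrix.of_gcd_eq_sum_totient_smul_vecMulVec {ι : Type*} [Fintype ι] (g : ι → ℕ)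
    {n : ℕ} (hn : n ≠ 0) (hg : ∀ i, g i ∣ n) :
    (of fun i j => (Nat.gcd (g i) (g j) : ℝ)) =
      ∑ d ∈ n.divisors, (φ d : ℝ) •
        vecMulVec (fun i => if d ∣ g i then 1 else 0) (fun i => if d ∣ g i then 1 else 0) := by
  ext i j
  rw [of_apply, Nat.gcd_eq_sum_totient_of_dvd hn (hg i), Nat.cast_sum, sum_filter, sum_apply]
  refine sum_congr rfl fun d _ => ?_
  simp only [smul_apply, vecMulVec_apply, smul_eq_mul]
  split_ifs <;> simp_all

theorem Matrix.posSemidef_of_gcd {ι : Type*} [Fintype ι] (g : ι → ℕ) (hg : ∀ i, g i ≠ 0) :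
    (of fun i j => (Nat.gcd (g i) (g j) : ℝ)).PosSemidef := by
  classical
  rw [of_gcd_eq_sum_totient_smul_vecMulVec g (prod_ne_zero_iff.mpr fun i _ => hg i)
    fun i => dvd_prod_of_mem g (mem_univ i)]
  exact posSemidef_sum _ fun d _ =>
    (posSemidef_vecMulVec_self_star _).smul (Nat.cast_nonneg _)

/-- The function `f(x, y) = gcd(x, y)` on `ℤ₊²` is positive
definite. -/
theorem gcd_isPosDefArith2 :
    IsPosDefArith2 (fun x y => (Nat.gcd x y : ℝ)) := by
  intro S _ hpos
  convert posSemidef_of_gcd (fun x : S => Nat.gcd x.1.1 x.1.2)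
    fun x => (Nat.gcd_pos_of_pos_left _ (hpos x.1 x.2).1).ne' using 1
  ext x y
  simp only [of_apply]
  ac_rfl
end

section
/- The function f : ℤ₊² → ℝ defined by f(x, y) = lcm(x, y) is not positive definite; in particular, the 4 × 4 matrix indexed by {1, 2}² with entry at ((x₁, x₂), (y₁, y₂)) equal to lcm(gcd(x₁, y₁), gcd(x₂, y₂)) is not positive semidefinite. -/
theorem IsPosDefArith2.posSemidef_of_pos {f : ℕ → ℕ → ℝ} (hf : IsPosDefArith2 f)
    {ι : Type*} [Fintype ι] (e : ι → ℕ × ℕ) (he : ∀ i, 0 < (e i).1 ∧ 0 < (e i).2) :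
    (Matrix.of fun i j => f (Nat.gcd (e i).1 (e j).1) (Nat.gcd (e i).2 (e j).2)).PosSemidef := by
  classical
  rcases isEmpty_or_nonempty ι with hι | ⟨⟨i₀⟩⟩
  · rw [Subsingleton.elim (Matrix.of _) (0 : Matrix ι ι ℝ)]
    exact Matrix.PosSemidef.zero
  have hS := hf (Finset.univ.image e) ⟨e i₀, by simp⟩ (by simpa using he)
  exact hS.submatrix fun i => ⟨e i, by simp⟩

theorem not_posSemidef_lcm_gcd_fin_two :
    ¬ (Matrix.of fun p q : Fin 2 × Fin 2 =>
        (Nat.lcm (Nat.gcd ((p.1 : ℕ) + 1) ((q.1 : ℕ) + 1))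
          (Nat.gcd ((p.2 : ℕ) + 1) ((q.2 : ℕ) + 1)) : ℝ)).PosSemidef := by
  intro h
  have hv := h.dotProduct_mulVec_nonneg fun p => (-1 : ℝ) ^ ((p.1 : ℕ) + (p.2 : ℕ))
  simp only [dotProduct, Matrix.mulVec, Matrix.of_apply, star_trivial,
    Fintype.sum_prod_type, Fin.sum_univ_two] at hv
  norm_num at hv

/-- The function `f(x, y) = lcm(x, y)` on `ℤ₊²` is not positive
definite; in particular, the `4 × 4` matrix indexed by `{1, 2}²` (encoded via
`Fin 2 × Fin 2`, coordinate values being `i + 1`) with entry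
`lcm(gcd(x₁,y₁), gcd(x₂,y₂))` is not positive semidefinite. -/
theorem lcm_not_posDefArith2 :
    ¬ IsPosDefArith2 (fun x y => (Nat.lcm x y : ℝ)) ∧
    ¬ (Matrix.of fun p q : Fin 2 × Fin 2 =>
        (Nat.lcm (Nat.gcd ((p.1 : ℕ) + 1) ((q.1 : ℕ) + 1))
          (Nat.gcd ((p.2 : ℕ) + 1) ((q.2 : ℕ) + 1)) : ℝ)).PosSemidef :=
  ⟨fun hf => not_posSemidef_lcm_gcd_fin_two <|
      hf.posSemidef_of_pos (fun p : Fin 2 × Fin 2 => ((p.1 : ℕ) + 1, (p.2 : ℕ) + 1))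
        fun _ => ⟨Nat.succ_pos _, Nat.succ_pos _⟩,
    not_posSemidef_lcm_gcd_fin_two⟩
end

section
/- For every real α > 0, the function f : ℤ₊² → ℝ defined by f(x, y) = gcd(x, y)^α is positive definite. -/
open Finset

namespace ArithmeticFunction

noncomputable def rpow (α : ℝ) : ArithmeticFunction ℝ :=
  ⟨fun n => if n = 0 then 0 else (n : ℝ) ^ α, if_pos rfl⟩

theorem rpow_apply {α : ℝ} {n : ℕ} (hn : n ≠ 0) : rpow α n = (n : ℝ) ^ α := if_neg hn

theorem isMultiplicative_rpow (α : ℝ) : (rpow α).IsMultiplicative := by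
  rw [IsMultiplicative.iff_ne_zero]
  refine ⟨rpow_apply one_ne_zero |>.trans (by simp), fun {m n} hm hn _ => ?_⟩
  rw [rpow_apply hm, rpow_apply hn, rpow_apply (mul_ne_zero hm hn), Nat.cast_mul,
    Real.mul_rpow m.cast_nonneg n.cast_nonneg]

noncomputable def jordanTotient (α : ℝ) : ArithmeticFunction ℝ :=
  (moebius : ArithmeticFunction ℝ) * rpow α

theorem isMultiplicative_jordanTotient (α : ℝ) : (jordanTotient α).IsMultiplicative :=
  isMultiplicative_moebius.intCast.mul (isMultiplicative_rpow α)

theorem sum_divisors_jordanTotient (α : ℝ) {n : ℕ} (hn : n ≠ 0) :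
    ∑ d ∈ n.divisors, jordanTotient α d = (n : ℝ) ^ α := by
  rw [← coe_zeta_mul_apply, jordanTotient, ← mul_assoc, coe_zeta_mul_coe_moebius, one_mul,
    rpow_apply hn]

theorem jordanTotient_prime_pow_succ (α : ℝ) {p : ℕ} (hp : p.Prime) (k : ℕ) :
    jordanTotient α (p ^ (k + 1)) = ((p : ℝ) ^ (k + 1)) ^ α - ((p : ℝ) ^ k) ^ α := by
  have hk := sum_divisors_jordanTotient α (pow_ne_zero k hp.ne_zero)
  have hk1 := sum_divisors_jordanTotient α (pow_ne_zero (k + 1) hp.ne_zero)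
  rw [Nat.sum_divisors_prime_pow hp] at hk hk1
  rw [sum_range_succ, hk] at hk1
  push_cast at hk1
  linarith

theorem jordanTotient_prime_pow_nonneg {α : ℝ} (hα : 0 ≤ α) {p : ℕ} (hp : p.Prime) :
    ∀ k, 0 ≤ jordanTotient α (p ^ k)
  | 0 => by simp [(isMultiplicative_jordanTotient α).map_one]
  | k + 1 => by
    rw [jordanTotient_prime_pow_succ α hp, sub_nonneg]
    gcongr
    · exact_mod_cast hp.one_le
    · omega

theorem jordanTotient_nonneg {α : ℝ} (hα : 0 ≤ α) (n : ℕ) : 0 ≤ jordanTotient α n := by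
  rcases eq_or_ne n 0 with rfl | hn
  · simp
  rw [(isMultiplicative_jordanTotient α).multiplicative_factorization _ hn]
  exact prod_nonneg fun p hp =>
    jordanTotient_prime_pow_nonneg hα (Nat.prime_of_mem_primeFactors hp) _

end ArithmeticFunction

namespace Matrix

theorem posSemidef_gcd_of_sum_divisors {ι : Type*} [Fintype ι] {f g : ℕ → ℝ} (hg : ∀ d, 0 ≤ g d)
    (hfg : ∀ n ≠ 0, ∑ d ∈ n.divisors, g d = f n) (u : ι → ℕ) (hu : ∀ i, u i ≠ 0) :
    (of fun i j => f (Nat.gcd (u i) (u j))).PosSemidef := by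
  classical
  let T : Finset ℕ := univ.sup fun i => (u i).divisors
  let E : Matrix T ι ℝ := of fun d i => if (d : ℕ) ∣ u i then 1 else 0
  suffices of (fun i j => f (Nat.gcd (u i) (u j))) = Eᴴ * diagonal (fun d : T => g d) * E by
    rw [this]
    exact (PosSemidef.diagonal fun d : T => hg d).conjTranspose_mul_mul_same E
  ext i j
  have hdiv : T.filter (· ∣ Nat.gcd (u i) (u j)) = (Nat.gcd (u i) (u j)).divisors := by
    ext d
    simp only [T, mem_filter, mem_sup, mem_univ, true_and, Nat.mem_divisors, Nat.dvd_gcd_iff]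
    grind
  rw [mul_apply]
  simp only [of_apply, mul_diagonal, conjTranspose_apply, E, star_trivial]
  rw [← hfg _ (Nat.gcd_ne_zero_left (hu i)), ← hdiv, sum_filter, ← sum_coe_sort T]
  refine sum_congr rfl fun d _ => ?_
  by_cases hi : (d : ℕ) ∣ u i <;> by_cases hj : (d : ℕ) ∣ u j <;> simp [hi, hj, Nat.dvd_gcd_iff]

end Matrix

open ArithmeticFunction

/-- For every real `α > 0`, the function `f(x, y) = gcd(x, y)^α` on
`ℤ₊²` is positive definite. -/
theorem gcd_rpow_isPosDefArith2 (α : ℝ) (hα : 0 < α) :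
    IsPosDefArith2 (fun x y => (Nat.gcd x y : ℝ) ^ α) := by
  intro S _ hS
  have hu (x : S) : Nat.gcd x.1.1 x.1.2 ≠ 0 := Nat.gcd_ne_zero_left (hS x x.2).1.ne'
  convert Matrix.posSemidef_gcd_of_sum_divisors (jordanTotient_nonneg hα.le)
    (fun n hn => sum_divisors_jordanTotient α hn) _ hu using 1
  ext x y
  simp only [Matrix.of_apply]
  ac_rfl
end

section
/- Let C(m, n) = ∑_{d ∣ gcd(m, n)} d·μ(n/d) denote Ramanujan's sum, where μ is the arithmetic Möbius function. Then for all m, n ∈ ℤ₊, (C *₂ μ₂)(m, n) = m·(μ * μ)(n/m) if m ∣ n, and (C *₂ μ₂)(m, n) = 0 if m ∤ n, where *₂ is the bivariate Dirichlet convolution, μ₂(m, n) = μ(m)μ(n), and * is the univariate Dirichlet convolution. -/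
/-- The univariate Dirichlet convolution `(g * h)(n) = ∑_{k ∣ n} g(k) h(n/k)`. -/
noncomputable def dirichletConv1 (g h : ℕ → ℝ) : ℕ → ℝ :=
  fun n => ∑ k ∈ n.divisors, g k * h (n / k)

/-- The bivariate Dirichlet convolution
`(f *₂ g)(i₁, i₂) = ∑_{k₁ ∣ i₁, k₂ ∣ i₂} f(k₁, k₂) g(i₁/k₁, i₂/k₂)`. -/
noncomputable def dirichletConv2 (f g : ℕ → ℕ → ℝ) : ℕ → ℕ → ℝ :=
  fun i₁ i₂ => ∑ k₁ ∈ i₁.divisors, ∑ k₂ ∈ i₂.divisors, f k₁ k₂ * g (i₁ / k₁) (i₂ / k₂)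

/-- Ramanujan's sum `C(m, n) = ∑_{d ∣ gcd(m, n)} d·μ(n/d)`. -/
noncomputable def ramanujanC (m n : ℕ) : ℝ :=
  ∑ d ∈ (Nat.gcd m n).divisors, (d : ℝ) * muR (n / d)

/-! For fixed `n`, `C(·, n) = ζ * (d ↦ [d ∣ n] d μ(n/d))`, so by Möbius inversion convolving `C`
with `μ` in the first variable gives `(m, k) ↦ [m ∣ k] m μ(k/m)`. Convolving this with `μ` in the
second variable and writing the divisors `k` of `n` that are multiples of `m` as `k = m j` with
`j ∣ n/m` leaves `m (μ * μ)(n/m)`. -/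

open Finset ArithmeticFunction

lemma ramanujanC_eq_sum_divisors {k : ℕ} (hk : k ≠ 0) (n : ℕ) :
    ramanujanC k n = ∑ d ∈ k.divisors, if d ∣ n then (d : ℝ) * muR (n / d) else 0 := by
  rw [← sum_filter, ramanujanC, ← Nat.divisors_filter_dvd_of_dvd hk (Nat.gcd_dvd_left k n)]
  refine sum_congr (filter_congr fun d hd => ?_) fun _ _ => rfl
  rw [Nat.dvd_gcd_iff, and_iff_right (Nat.dvd_of_mem_divisors hd)]

lemma sum_ramanujanC_mul_muR (m n : ℕ) :
    ∑ k ∈ m.divisors, ramanujanC k n * muR (m / k)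
      = if m ∣ n then (m : ℝ) * muR (n / m) else 0 := by
  rcases m.eq_zero_or_pos with rfl | hm
  · simp
  have inversion := sum_eq_iff_sum_mul_moebius_eq.mp
    (fun k hk => (ramanujanC_eq_sum_divisors hk.ne' n).symm) m hm
  rw [← inversion, Nat.sum_divisorsAntidiagonal' fun a b => (moebius a : ℝ) * ramanujanC b n]
  exact sum_congr rfl fun k _ => mul_comm _ _

lemma sum_divisors_ite_dvd {M : Type*} [AddCommMonoid M] (f : ℕ → ℕ → M) (m n : ℕ) :
    ∑ k ∈ n.divisors, (if m ∣ k then f (k / m) (n / k) else 0)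
      = if m ∣ n then ∑ j ∈ (n / m).divisors, f j (n / m / j) else 0 := by
  rcases m.eq_zero_or_pos with rfl | hm
  · simp
  split_ifs with hmn
  · obtain ⟨c, rfl⟩ := hmn
    have multiples : {k ∈ (m * c).divisors | m ∣ k}
        = c.divisors.map ⟨(m * ·), mul_right_injective₀ hm.ne'⟩ := by
      ext k
      simp only [mem_filter, Nat.mem_divisors, mem_map, Function.Embedding.coeFn_mk]
      constructor
      · rintro ⟨⟨hkc, hmc⟩, j, rfl⟩
        exact ⟨j, ⟨(mul_dvd_mul_iff_left hm.ne').mp hkc, right_ne_zero_of_mul hmc⟩, rfl⟩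
      · rintro ⟨j, ⟨hjc, hc⟩, rfl⟩
        exact ⟨⟨mul_dvd_mul_left m hjc, mul_ne_zero hm.ne' hc⟩, dvd_mul_right m j⟩
    rw [← sum_filter, multiples, sum_map]
    simp [Nat.mul_div_cancel_left _ hm, Nat.mul_div_mul_left _ _ hm]
  · exact sum_eq_zero fun k hk =>
      if_neg fun hmk => hmn (hmk.trans (Nat.dvd_of_mem_divisors hk))

theorem ramanujan_conv_mu2_general (m n : ℕ) :
    dirichletConv2 ramanujanC (fun a b => muR a * muR b) m n
      = if m ∣ n then (m : ℝ) * dirichletConv1 muR muR (n / m) else 0 := by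
  calc dirichletConv2 ramanujanC (fun a b => muR a * muR b) m n
      = ∑ k ∈ n.divisors, (∑ j ∈ m.divisors, ramanujanC j k * muR (m / j)) * muR (n / k) := by
        simp only [dirichletConv2, sum_mul, mul_assoc]
        exact sum_comm
    _ = ∑ k ∈ n.divisors, if m ∣ k then (m : ℝ) * muR (k / m) * muR (n / k) else 0 := by
        simp only [sum_ramanujanC_mul_muR, ite_mul, zero_mul]
    _ = _ := by
        rw [sum_divisors_ite_dvd (fun a b => (m : ℝ) * muR a * muR b), dirichletConv1, mul_sum]
        simp only [mul_assoc]

/-- For all positive integers `m, n`: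
`(C *₂ μ₂)(m, n) = m·(μ * μ)(n/m)` if `m ∣ n`, and `(C *₂ μ₂)(m, n) = 0` otherwise,
where `μ₂(m, n) = μ(m)μ(n)`. -/
theorem ramanujan_conv_mu2 (m n : ℕ) (hm : 0 < m) (hn : 0 < n) :
    dirichletConv2 ramanujanC (fun a b => muR a * muR b) m n
      = if m ∣ n then (m : ℝ) * dirichletConv1 muR muR (n / m) else 0 :=
  ramanujan_conv_mu2_general m n
end

section
/- Ramanujan's sum C : ℤ₊² → ℝ, C(m, n) = ∑_{d ∣ gcd(m, n)} d·μ(n/d), is not positive definite as a function of two variables; that is, there exists a finite nonempty set S ⊆ ℤ₊² such that the matrix with entries C(gcd(x₁, y₁), gcd(x₂, y₂)) for (x₁, x₂), (y₁, y₂) ∈ S is not positive semidefinite. -/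
theorem IsPosDefArith2.nonneg {f : ℕ → ℕ → ℝ} (hf : IsPosDefArith2 f) {m n : ℕ}
    (hm : 0 < m) (hn : 0 < n) : 0 ≤ f m n := by
  have hS := hf {(m, n)} (Finset.singleton_nonempty _) (by simp [hm, hn])
  simpa using hS.diag_nonneg (i := ⟨(m, n), Finset.mem_singleton_self _⟩)

theorem ramanujanC_one_left (n : ℕ) : ramanujanC 1 n = muR n := by
  simp [ramanujanC]

/-- Ramanujan's sum `C(m, n)` is not positive definite as a function
of two variables. -/
theorem ramanujan_not_posDefArith2 : ¬ IsPosDefArith2 ramanujanC := fun h => by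
  have h12 := h.nonneg one_pos two_pos
  rw [ramanujanC_one_left, muR, ArithmeticFunction.moebius_apply_prime Nat.prime_two] at h12
  norm_num at h12
end
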